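/- Uniqueness of the data Shapley value (corrected form of the paper's Proposition, including efficiency): let ψ assign to every performance score V : 𝒫(D) → ℝ and every i ∈ D a real value ψ_i(V), and suppose ψ satisfies (i) the null player property (if V(S ∪ {i}) = V(S) for all S ⊆ D \ {i}, then ψ_i(V) = 0), (ii) symmetry (if V(S ∪ {i}) = V(S ∪ {j}) for all S ⊆ D \ {i,j}, then ψ_i(V) = ψ_j(V)), (iii) additivity (ψ_i(V + W) = ψ_i(V) + ψ_i(W) for all performance scores V, W and all i ∈ D, where (V+W)(S) = V(S) + W(S)), and (iv) efficiency (Σ_{i ∈ D} ψ_i(V) = V(D) − V(∅)). Then for every performance score V and every i ∈ D, ψ_i(V) = (1/n) · Σ_{S ⊆ D \ {i}} (V(S ∪ {i}) − V(S)) / binom(n−1, |S|), i.e. ψ coincides with the data Shapley value. -/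

import Mathlib

/-- The data Shapley value of data source `i` for performance score `V`,
with normalization constant `C = 1/n`. -/
noncomputable def dataShapley {n : ℕ} (V : Finset (Fin n) → ℝ) (i : Fin n) : ℝ :=
  (1 / (n : ℝ)) * ∑ S ∈ (Finset.univ.erase i).powerset,
    (V (insert i S) - V S) / ((n - 1).choose S.card : ℝ)

/-!
Every performance score is a sum of scaled unanimity games `S ↦ c · [T ⊆ S]`, with coefficients
given by Möbius inversion on the subset lattice. On such a game, the null player property kills
every `i ∉ T`, symmetry makes all `i ∈ T` equal, and efficiency forces their common value to be
`c / |T|`; so additivity pins down `ψ` on every score. The data Shapley value is additive and a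
hockey-stick computation shows that it takes the same values on unanimity games.
-/

open Finset IncidenceAlgebra

section Moebius

variable {𝕜 α : Type*} [Ring 𝕜] [PartialOrder α] [OrderBot α] [LocallyFiniteOrder α]
  [DecidableEq α]

theorem sum_Iic_sum_Iic_mu_mul (g : α → 𝕜) (x : α) :
    ∑ y ∈ Iic x, ∑ z ∈ Iic y, mu 𝕜 z y * g z = g x := by
  rw [sum_comm' (t' := Iic x) (s' := fun z => Icc z x)
    (fun y z => by simp only [mem_Iic, mem_Icc]; exact ⟨fun h => ⟨⟨h.2, h.1⟩, h.2.trans h.1⟩,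
      fun h => ⟨h.1.2, h.1.1⟩⟩)]
  simp_rw [← sum_mul, sum_Icc_mu_right, ite_mul, one_mul, zero_mul]
  simp

end Moebius

section UnanimityGame

variable {ι : Type*} [DecidableEq ι]

/-- The scale `c` is built in because additivity alone does not give `ψ (c • V) = c • ψ V`. -/
def unanimityGame (c : ℝ) (T S : Finset ι) : ℝ := if T ⊆ S then c else 0

theorem unanimityGame_insert_of_notMem {c : ℝ} {T : Finset ι} {i : ι} (hi : i ∉ T)
    (S : Finset ι) : unanimityGame c T (insert i S) = unanimityGame c T S := by
  simp only [unanimityGame, subset_insert_iff_of_notMem hi]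

theorem unanimityGame_insert_eq_zero {c : ℝ} {T S : Finset ι} {i j : ι} (hj : j ∈ T)
    (hji : j ≠ i) (hjS : j ∉ S) : unanimityGame c T (insert i S) = 0 :=
  if_neg fun h => by simpa [hji, hjS] using h hj

theorem unanimityGame_insert_sub {c : ℝ} {T S : Finset ι} {i : ι} (hi : i ∈ T) (hiS : i ∉ S) :
    unanimityGame c T (insert i S) - unanimityGame c T S = unanimityGame c (T.erase i) S := by
  have hT : ¬T ⊆ S := fun h => hiS (h hi)
  simp only [unanimityGame, subset_insert_iff, if_neg hT, sub_zero]

noncomputable def moebiusTransform (V : Finset ι → ℝ) (T : Finset ι) : ℝ :=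
  ∑ U ∈ Iic T, mu ℝ U T * V U

variable [Fintype ι]

theorem sum_unanimityGame_moebiusTransform (V : Finset ι → ℝ) :
    ∑ T, unanimityGame (moebiusTransform V T) T = V := by
  ext S
  have hIic : univ.filter (· ⊆ S) = Iic S := by ext; simp
  simp only [Finset.sum_apply, unanimityGame, ← sum_filter, hIic, moebiusTransform,
    sum_Iic_sum_Iic_mu_mul]

theorem apply_eq_sum_apply_unanimityGame (φ : (Finset ι → ℝ) → ℝ)
    (hadd : ∀ V W : Finset ι → ℝ, φ (fun S => V S + W S) = φ V + φ W) (V : Finset ι → ℝ) :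
    φ V = ∑ T, φ (unanimityGame (moebiusTransform V T) T) := by
  conv_lhs => rw [← sum_unanimityGame_moebiusTransform V]
  exact map_sum (AddMonoidHom.mk' φ hadd) _ _

theorem apply_unanimityGame (ψ : (Finset ι → ℝ) → ι → ℝ)
    (hnull : ∀ (V : Finset ι → ℝ) (i : ι),
      (∀ S ⊆ Finset.univ.erase i, V (insert i S) = V S) → ψ V i = 0)
    (hsym : ∀ (V : Finset ι → ℝ) (i j : ι), i ≠ j →
      (∀ S ⊆ (Finset.univ.erase i).erase j, V (insert i S) = V (insert j S)) →
      ψ V i = ψ V j)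
    (heff : ∀ V : Finset ι → ℝ, ∑ i, ψ V i = V Finset.univ - V ∅)
    (c : ℝ) (T : Finset ι) (i : ι) :
    ψ (unanimityGame c T) i = if i ∈ T then c / #T else 0 := by
  have hnull' : ∀ j ∉ T, ψ (unanimityGame c T) j = 0 := fun j hj =>
    hnull _ j fun S _ => unanimityGame_insert_of_notMem hj S
  split_ifs with hi
  swap
  · exact hnull' i hi
  have hsymm : ∀ j ∈ T, ψ (unanimityGame c T) j = ψ (unanimityGame c T) i := by
    intro j hj
    rcases eq_or_ne j i with rfl | hji
    · rfl
    refine hsym _ j i hji fun S hS => ?_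
    have hiS : i ∉ S := fun h => by simpa using hS h
    have hjS : j ∉ S := fun h => by simpa using hS h
    rw [unanimityGame_insert_eq_zero hi hji.symm hiS, unanimityGame_insert_eq_zero hj hji hjS]
  have hcard : (#T : ℝ) ≠ 0 := Nat.cast_ne_zero.2 (card_ne_zero_of_mem hi)
  have hsum : #T * ψ (unanimityGame c T) i = c :=
    calc #T * ψ (unanimityGame c T) i = ∑ j ∈ T, ψ (unanimityGame c T) j := by
          rw [sum_congr rfl hsymm, sum_const, nsmul_eq_mul]
      _ = ∑ j, ψ (unanimityGame c T) j :=
          sum_subset (subset_univ T) fun j _ hj => hnull' j hj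
      _ = c := by
          rw [heff]
          simp [unanimityGame, subset_empty, ne_empty_of_mem hi]
  rw [eq_div_iff hcard, mul_comm, hsum]

end UnanimityGame

theorem sum_range_choose_div_choose_add (m t : ℕ) :
    ∑ k ∈ range (m + 1), (m.choose k : ℝ) / (m + t).choose (t + k) = (m + t + 1) / (t + 1) := by
  have hpos : ∀ k, k ≤ m + t → ((m + t).choose k : ℝ) ≠ 0 := fun k hk =>
    Nat.cast_ne_zero.2 (Nat.choose_pos hk).ne'
  have hterm : ∀ k ∈ range (m + 1),
      (m.choose k : ℝ) / (m + t).choose (t + k) = (k + t).choose t / (m + t).choose t := by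
    intro k hk
    have hk : k ≤ m := Nat.lt_succ_iff.1 (mem_range.1 hk)
    have h := Nat.choose_mul (n := m + t) (k := t + k) (s := t) (Nat.le_add_right t k)
    rw [Nat.add_sub_cancel, Nat.add_sub_cancel_left, add_comm t k] at h
    have h' : ((m + t).choose (k + t) : ℝ) * (k + t).choose t = (m + t).choose t * m.choose k := by
      exact_mod_cast h
    rw [add_comm t k, div_eq_div_iff (hpos _ (by omega)) (hpos _ (by omega))]
    linear_combination -h'
  have hstick :
      ((m + t + 1 : ℕ) : ℝ) * (m + t).choose t = (m + t + 1).choose (t + 1) * (t + 1) := by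
    exact_mod_cast Nat.add_one_mul_choose_eq (m + t) t
  rw [sum_congr rfl hterm, ← sum_div, ← Nat.cast_sum, Nat.sum_range_add_choose,
    div_eq_div_iff (hpos _ (by omega)) (by positivity)]
  push_cast at hstick
  linear_combination -hstick

theorem sum_Icc_inv_choose_card {α : Type*} [DecidableEq α] {A E : Finset α} (h : A ⊆ E) :
    ∑ S ∈ Icc A E, (((#E).choose #S : ℕ) : ℝ)⁻¹ = (#E + 1) / (#A + 1) := by
  have hdisj : ∀ R ∈ (E \ A).powerset, Disjoint A R := fun R hR =>
    disjoint_of_subset_right (mem_powerset.1 hR) disjoint_sdiff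
  have hinj : Set.InjOn (A ∪ ·) ((E \ A).powerset : Set (Finset α)) := fun R hR R' hR' hRR' => by
    rw [← union_sdiff_cancel_left (hdisj R hR), ← union_sdiff_cancel_left (hdisj R' hR')]
    exact congrArg (· \ A) hRR'
  have hcard : ∀ R ∈ (E \ A).powerset, #(A ∪ R) = #A + #R := fun R hR =>
    card_union_of_disjoint (hdisj R hR)
  rw [Icc_eq_image_powerset h, sum_image hinj, sum_congr rfl fun R hR => by rw [hcard R hR],
    sum_powerset_apply_card (fun k => (((#E).choose (#A + k) : ℕ) : ℝ)⁻¹)]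
  have hE : #E = #(E \ A) + #A := (card_sdiff_add_card_eq_card h).symm
  rw [hE]
  simp only [nsmul_eq_mul, ← div_eq_mul_inv]
  push_cast
  exact sum_range_choose_div_choose_add _ _

theorem dataShapley_add {n : ℕ} (V W : Finset (Fin n) → ℝ) (i : Fin n) :
    dataShapley (fun S => V S + W S) i = dataShapley V i + dataShapley W i := by
  simp only [dataShapley, ← mul_add, ← sum_add_distrib, ← add_div]
  congr 2 with S
  ring

theorem dataShapley_unanimityGame {n : ℕ} (c : ℝ) (T : Finset (Fin n)) (i : Fin n) :
    dataShapley (unanimityGame c T) i = if i ∈ T then c / #T else 0 := by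
  unfold dataShapley
  split_ifs with hi
  swap
  · simp [unanimityGame_insert_of_notMem hi]
  have hE : #(univ.erase i) = n - 1 := by simp
  have hIcc : {S ∈ (univ.erase i).powerset | T.erase i ⊆ S} = Icc (T.erase i) (univ.erase i) := by
    ext S
    simp [and_comm]
  have hmarg : ∀ S ∈ (univ.erase i).powerset,
      (unanimityGame c T (insert i S) - unanimityGame c T S) / ((n - 1).choose #S : ℝ) =
        if T.erase i ⊆ S then c * (((#(univ.erase i)).choose #S : ℕ) : ℝ)⁻¹ else 0 := by
    intro S hS
    have hiS : i ∉ S := fun h => by simpa using mem_powerset.1 hS h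
    rw [unanimityGame_insert_sub hi hiS, hE, unanimityGame, ite_div, zero_div, div_eq_mul_inv]
  have hn : (#(univ.erase i) : ℝ) + 1 = n := by
    exact_mod_cast (card_erase_add_one (mem_univ i)).trans (card_fin n)
  have hT : (#(T.erase i) : ℝ) + 1 = #T := by exact_mod_cast card_erase_add_one hi
  rw [sum_congr rfl hmarg, ← sum_filter, hIcc, ← mul_sum,
    sum_Icc_inv_choose_card (erase_subset_erase i (subset_univ T)), hn, hT]
  have : (n : ℝ) ≠ 0 := Nat.cast_ne_zero.2 (Fin.pos i).ne'
  field_simp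

/-- Uniqueness of the data Shapley value: any valuation `ψ` satisfying the null player
property, symmetry, additivity, and efficiency coincides with the data Shapley value
`φ_i(V) = (1/n) · Σ_{S ⊆ D \ {i}} (V(S ∪ {i}) − V(S)) / binom(n−1, |S|)`. -/
theorem dataShapley_unique {n : ℕ}
    (ψ : (Finset (Fin n) → ℝ) → Fin n → ℝ)
    (hnull : ∀ (V : Finset (Fin n) → ℝ) (i : Fin n),
      (∀ S ⊆ Finset.univ.erase i, V (insert i S) = V S) → ψ V i = 0)
    (hsym : ∀ (V : Finset (Fin n) → ℝ) (i j : Fin n), i ≠ j →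
      (∀ S ⊆ (Finset.univ.erase i).erase j, V (insert i S) = V (insert j S)) →
      ψ V i = ψ V j)
    (hadd : ∀ (V W : Finset (Fin n) → ℝ) (i : Fin n),
      ψ (fun S => V S + W S) i = ψ V i + ψ W i)
    (heff : ∀ V : Finset (Fin n) → ℝ, ∑ i : Fin n, ψ V i = V Finset.univ - V ∅) :
    ∀ (V : Finset (Fin n) → ℝ) (i : Fin n), ψ V i = dataShapley V i := by
  intro V i
  rw [apply_eq_sum_apply_unanimityGame (ψ · i) (fun V W => hadd V W i) V,
    apply_eq_sum_apply_unanimityGame (dataShapley · i) (fun V W => dataShapley_add V W i) V]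
  refine sum_congr rfl fun T _ => ?_
  rw [apply_unanimityGame ψ hnull hsym heff, dataShapley_unanimityGame]
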